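/- Let x = (r₁ cos θ₁, r₁ sin θ₁) and y = (r₂ cos θ₂, r₂ sin θ₂) in ℝ² with r₂ > 0 and x ≠ y. Then the directional derivative of y ↦ (1/(2π))·ln‖x − y‖ in the direction of the outward unit normal n_y = y/‖y‖ equals (r₂² − r₁ r₂ cos(θ₁ − θ₂))/(2π·‖x − y‖²·r₂). In particular, when r₂ = 1 it equals (1 − r₁ cos(θ₁ − θ₂))/(2π·(1 + r₁² − 2 r₁ cos(θ₁ − θ₂))). -/

import Mathlib

/-!
Differentiating `log ‖x - z‖ = ½ log ‖x - z‖²` gives the gradient `(y - x) / ‖x - y‖²` at `z = y`,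
so the normal derivative is `⟪y - x, y⟫ / (‖x - y‖² ‖y‖)`. In polar coordinates
`⟪x, y⟫ = r₁ r₂ cos (θ₁ - θ₂)` and `‖y‖ = r₂`, which turns this into the stated formula, and
the case `r₂ = 1` follows from the law of cosines for `‖x - y‖²`.
-/

open Real
open scoped RealInnerProductSpace

section
variable {F : Type*} [NormedAddCommGroup F] [InnerProductSpace ℝ F]

theorem hasFDerivAt_log_norm_sub {x y : F} (h : x ≠ y) :
    HasFDerivAt (fun z => log ‖x - z‖) ((‖x - y‖ ^ 2)⁻¹ • innerSL ℝ (y - x)) y := by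
  have hsq : HasFDerivAt (fun z => ‖x - z‖ ^ 2)
      (2 • (innerSL ℝ (x - y)).comp (-ContinuousLinearMap.id ℝ F)) y := by
    simpa using ((hasFDerivAt_id y).const_sub x).norm_sq
  have hne : ‖x - y‖ ^ 2 ≠ 0 := by simpa [sub_eq_zero] using h
  have half_log_sq : (fun z => log ‖x - z‖) = fun z => 1 / 2 * log (‖x - z‖ ^ 2) := by
    funext z
    rw [log_pow]
    ring
  rw [half_log_sq]
  refine ((hsq.log hne).const_mul (1 / 2)).congr_fderiv ?_
  ext v
  simp only [smul_apply, sub_apply, coe_innerSL_apply, map_sub, ContinuousLinearMap.comp_neg,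
    ContinuousLinearMap.comp_id, neg_sub, nsmul_eq_mul, Nat.cast_ofNat, smul_eq_mul]
  ring

theorem fderiv_log_norm_sub_apply_normal {x y : F} (h : x ≠ y) :
    fderiv ℝ (fun z => log ‖x - z‖) y (‖y‖⁻¹ • y) = (‖y‖ ^ 2 - ⟪x, y⟫) / (‖x - y‖ ^ 2 * ‖y‖) := by
  rw [(hasFDerivAt_log_norm_sub h).fderiv]
  simp only [smul_apply, innerSL_apply_apply, real_inner_smul_right,
    inner_sub_left, real_inner_self_eq_norm_sq, smul_eq_mul]
  field_simp
end

section
variable {x y : EuclideanSpace ℝ (Fin 2)} {r₁ r₂ θ₁ θ₂ : ℝ}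

theorem inner_eq_of_polar (hx : x.ofLp = ![r₁ * cos θ₁, r₁ * sin θ₁])
    (hy : y.ofLp = ![r₂ * cos θ₂, r₂ * sin θ₂]) : ⟪x, y⟫ = r₁ * r₂ * cos (θ₁ - θ₂) := by
  simp [PiLp.inner_apply, Fin.sum_univ_two, hx, hy, cos_sub]
  ring

theorem norm_sub_sq_eq_of_polar (hx : x.ofLp = ![r₁ * cos θ₁, r₁ * sin θ₁])
    (hy : y.ofLp = ![r₂ * cos θ₂, r₂ * sin θ₂]) :
    ‖x - y‖ ^ 2 = r₁ ^ 2 + r₂ ^ 2 - 2 * r₁ * r₂ * cos (θ₁ - θ₂) := by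
  rw [norm_sub_sq_real, ← real_inner_self_eq_norm_sq, ← real_inner_self_eq_norm_sq,
    inner_eq_of_polar hx hx, inner_eq_of_polar hy hy, inner_eq_of_polar hx hy]
  simp only [sub_self, cos_zero]
  ring

theorem norm_eq_of_polar (hr₂ : 0 ≤ r₂) (hy : y.ofLp = ![r₂ * cos θ₂, r₂ * sin θ₂]) :
    ‖y‖ = r₂ := by
  rw [← sq_eq_sq₀ (norm_nonneg y) hr₂, ← real_inner_self_eq_norm_sq, inner_eq_of_polar hy hy,
    sub_self, cos_zero]
  ring
end

/-- In polar coordinates, the directional derivative of `y ↦ (1/(2π))·ln‖x − y‖` in the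
direction of the outward unit normal `n_y = y/‖y‖` equals
`(r₂² − r₁r₂cos(θ₁ − θ₂))/(2π‖x − y‖²r₂)`; when `r₂ = 1` it equals
`(1 − r₁cos(θ₁ − θ₂))/(2π(1 + r₁² − 2r₁cos(θ₁ − θ₂)))`. -/
theorem normal_derivative_fundamental_solution (r₁ r₂ θ₁ θ₂ : ℝ) (hr₂ : 0 < r₂)
    (x y : EuclideanSpace ℝ (Fin 2))
    (hx : x = ![r₁ * Real.cos θ₁, r₁ * Real.sin θ₁])
    (hy : y = ![r₂ * Real.cos θ₂, r₂ * Real.sin θ₂])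
    (hxy : x ≠ y) :
    fderiv ℝ (fun z : EuclideanSpace ℝ (Fin 2) => (1 / (2 * π)) * Real.log ‖x - z‖) y
        (‖y‖⁻¹ • y)
      = (r₂ ^ 2 - r₁ * r₂ * Real.cos (θ₁ - θ₂)) / (2 * π * ‖x - y‖ ^ 2 * r₂)
    ∧ (r₂ = 1 →
      fderiv ℝ (fun z : EuclideanSpace ℝ (Fin 2) => (1 / (2 * π)) * Real.log ‖x - z‖) y
          (‖y‖⁻¹ • y)
        = (1 - r₁ * Real.cos (θ₁ - θ₂)) /
            (2 * π * (1 + r₁ ^ 2 - 2 * r₁ * Real.cos (θ₁ - θ₂)))) := by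
  have normal_derivative :
      fderiv ℝ (fun z : EuclideanSpace ℝ (Fin 2) => (1 / (2 * π)) * Real.log ‖x - z‖) y
          (‖y‖⁻¹ • y)
        = (r₂ ^ 2 - r₁ * r₂ * Real.cos (θ₁ - θ₂)) / (2 * π * ‖x - y‖ ^ 2 * r₂) := by
    rw [fderiv_const_mul (hasFDerivAt_log_norm_sub hxy).differentiableAt,
      smul_apply, fderiv_log_norm_sub_apply_normal hxy,
      norm_eq_of_polar hr₂.le hy, inner_eq_of_polar hx hy, smul_eq_mul]
    field_simp
  refine ⟨normal_derivative, fun hr₂_one => ?_⟩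
  rw [normal_derivative, norm_sub_sq_eq_of_polar hx hy, hr₂_one]
  ring_nf
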